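/- arXiv:math/0102190 — 2 statements merged into one kernel-verified Lean document; each statement's English description precedes it below -/
import Mathlib

section
/- With X₀ = -∑_{r=1}^{n-1} r E_{r+1,r} and Y₀ = ∑_{r=1}^{n-1} E_{r,r+1}, for any polynomial p of degree n with zero constant term, the determinant det(X₀ + p'(Y₀)) equals n! times the coefficient of z^n in the power series exp(p(z)). -/
open scoped BigOperators

/-- The base-point matrix `X₀ = -∑_{r=1}^{n-1} r E_{r+1,r}` (with 1-based indexing;
here `r : Fin (n-1)` runs over `0,…,n-2` so the summand is `(r+1) E_{r+2,r+1}`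
in 1-based terms, i.e. entry `(r+1, r)` in 0-based indexing with value `-(r+1)`). -/
noncomputable def X0 (n : ℕ) : Matrix (Fin n) (Fin n) ℂ :=
  -∑ r : Fin (n - 1), ((r : ℕ) + 1 : ℂ) •
    Matrix.single
      (⟨(r : ℕ) + 1, by have := r.isLt; omega⟩ : Fin n)
      (⟨(r : ℕ), by have := r.isLt; omega⟩ : Fin n) 1

/-- The base-point matrix `Y₀ = ∑_{r=1}^{n-1} E_{r,r+1}`. -/
noncomputable def Y0 (n : ℕ) : Matrix (Fin n) (Fin n) ℂ :=
  ∑ r : Fin (n - 1),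
    Matrix.single
      (⟨(r : ℕ), by have := r.isLt; omega⟩ : Fin n)
      (⟨(r : ℕ) + 1, by have := r.isLt; omega⟩ : Fin n) 1

/-!
The matrix `X₀ + p'(Y₀)` is upper Hessenberg: its `(i, j)` entry (indexed from `0`) is
`(j - i + 1) p_{j-i+1}` on and above the diagonal and `-i` just below it. Expanding the
determinant `dₙ` of its leading `n × n` block along the last column gives
`d_{n+1} = ∑_{i ≤ n} [z^{n-i}] p' · (n! / i!) · dᵢ`.
On the other side, `E = exp p` solves `E' = p' E`, so its coefficients satisfy
`(n + 1) e_{n+1} = ∑_{i ≤ n} [z^{n-i}] p' · eᵢ`; hence `dₙ = n! eₙ` by induction.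
As `p(0) = 0`, `eₙ` only involves the partial sum `∑_{k ≤ n} p^k / k!`.
-/

open Finset Polynomial
open scoped Nat

def leadingBlock {α : Type*} (f : ℕ → ℕ → α) (n : ℕ) : Matrix (Fin n) (Fin n) α :=
  Matrix.of fun i j => f i j

section Hessenberg

variable {R : Type*} [CommRing R] {f : ℕ → ℕ → R}

/-- Deleting row `i` and the last column leaves a block upper triangular matrix: the leading
`i × i` block, and an upper triangular block with diagonal `f k (k - 1)`, `i < k ≤ n`. -/
theorem det_leadingBlock_submatrix_succAbove_castSucc (hf : ∀ i j, j + 1 < i → f i j = 0)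
    (n : ℕ) (i : Fin (n + 1)) :
    ((leadingBlock f (n + 1)).submatrix i.succAbove Fin.castSucc).det =
      (∏ k ∈ Ioc (i : ℕ) n, f k (k - 1)) * (leadingBlock f i).det := by
  induction n with
  | zero => obtain rfl : i = 0 := Subsingleton.elim (α := Fin 1) _ _; simp
  | succ n ih =>
    induction i using Fin.lastCases with
    | last =>
      simp only [Fin.succAbove_last, Fin.val_last, Ioc_self, prod_empty, one_mul]
      rfl
    | cast i =>
      have hlast : i.castSucc.succAbove (Fin.last n) = Fin.last (n + 1) := by
        rw [Fin.succAbove_of_le_castSucc _ _ (Fin.castSucc_le_castSucc_iff.2 (Fin.le_last i)),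
          Fin.succ_last]
      have hrow (j : Fin n) : (leadingBlock f (n + 2)).submatrix i.castSucc.succAbove
          Fin.castSucc (Fin.last n) j.castSucc = 0 := by
        simp only [Matrix.submatrix_apply, hlast, leadingBlock, Matrix.of_apply]
        exact hf _ _ (by simp)
      have hminor : ((leadingBlock f (n + 2)).submatrix i.castSucc.succAbove Fin.castSucc).submatrix
          (Fin.last n).succAbove (Fin.last n).succAbove =
          (leadingBlock f (n + 1)).submatrix i.succAbove Fin.castSucc := by
        ext a b
        simp [leadingBlock]
      rw [Matrix.det_succ_row _ (Fin.last n), Fin.sum_univ_castSucc, Fin.val_castSucc,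
        prod_Ioc_succ_top (Nat.lt_succ_iff.1 i.isLt)]
      simp only [hrow, mul_zero, zero_mul, sum_const_zero, zero_add, hminor, ih,
        Matrix.submatrix_apply, hlast, Fin.val_castSucc, Fin.val_last, ← two_mul, pow_mul]
      simp only [leadingBlock, Matrix.of_apply, Fin.val_last, Fin.val_castSucc, Nat.add_sub_cancel]
      ring

theorem det_leadingBlock_succ (hf : ∀ i j, j + 1 < i → f i j = 0) (n : ℕ) :
    (leadingBlock f (n + 1)).det = ∑ i ∈ range (n + 1),
      (-1) ^ (i + n) * f i n * (∏ k ∈ Ioc i n, f k (k - 1)) * (leadingBlock f i).det := by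
  rw [Matrix.det_succ_column _ (Fin.last n), ← Fin.sum_univ_eq_sum_range]
  refine sum_congr rfl fun i _ => ?_
  rw [Fin.succAbove_last, det_leadingBlock_submatrix_succAbove_castSucc hf, Fin.val_last]
  simp only [leadingBlock, Matrix.of_apply, Fin.val_last]
  ring

end Hessenberg

section Shift

variable {R : Type*} [CommRing R]

theorem leadingBlock_shift_pow (n m : ℕ) :
    leadingBlock (fun i j => if j = i + 1 then (1 : R) else 0) n ^ m =
      leadingBlock (fun i j => if j = i + m then 1 else 0) n := by
  induction m with
  | zero => ext i j; simp [leadingBlock, Matrix.one_apply, Fin.ext_iff, eq_comm]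
  | succ m ih =>
    ext i j
    rw [pow_succ, ih]
    simp only [leadingBlock, Matrix.mul_apply, Matrix.of_apply, ite_mul, one_mul, zero_mul]
    rw [Fin.sum_univ_eq_sum_range
      (fun k => if k = (i : ℕ) + m then if (j : ℕ) = k + 1 then (1 : R) else 0 else 0)]
    simp only [sum_ite_eq', mem_range]
    split_ifs <;> first | rfl | (exfalso; omega)

theorem aeval_leadingBlock_shift (n : ℕ) (q : R[X]) :
    aeval (leadingBlock (fun i j => if j = i + 1 then (1 : R) else 0) n) q =
      leadingBlock (fun i j => if i ≤ j then q.coeff (j - i) else 0) n := by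
  induction q using Polynomial.induction_on' with
  | add q r hq hr =>
    rw [map_add, hq, hr]
    ext i j
    simp only [leadingBlock, Matrix.add_apply, Matrix.of_apply, coeff_add]
    split_ifs <;> simp
  | monomial k a =>
    rw [aeval_monomial, leadingBlock_shift_pow, Algebra.algebraMap_eq_smul_one, smul_one_mul]
    ext i j
    simp only [leadingBlock, Matrix.smul_apply, Matrix.of_apply, coeff_monomial, smul_eq_mul,
      mul_ite, mul_one, mul_zero]
    split_ifs <;> first | rfl | (exfalso; omega)

end Shift

section PartialExp

variable {K : Type*} [Field K]

noncomputable def partialExp (p : K[X]) (N : ℕ) : K[X] :=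
  ∑ k ∈ range (N + 1), (k ! : K)⁻¹ • p ^ k

theorem coeff_partialExp (p : K[X]) (N n : ℕ) :
    (partialExp p N).coeff n = ∑ k ∈ range (N + 1), (p ^ k).coeff n / k ! := by
  simp only [partialExp, finsetSum_coeff, coeff_smul, smul_eq_mul, inv_mul_eq_div]

theorem coeff_pow_eq_zero_of_lt {R : Type*} [Semiring R] {p : R[X]} (hp0 : p.coeff 0 = 0)
    {m i : ℕ} (h : i < m) : (p ^ m).coeff i = 0 := by
  obtain ⟨r, rfl⟩ := X_dvd_iff.mpr hp0
  rw [(commute_X r).mul_pow, coeff_X_pow_mul', if_neg (by omega)]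

theorem coeff_partialExp_of_le {p : K[X]} (hp0 : p.coeff 0 = 0) {n N : ℕ} (h : n ≤ N) :
    (partialExp p N).coeff n = (partialExp p n).coeff n := by
  rw [coeff_partialExp, coeff_partialExp]
  refine (sum_subset (range_subset_range.2 (by omega)) fun k hkN hkn => ?_).symm
  rw [coeff_pow_eq_zero_of_lt hp0 (by simp at hkn; omega), zero_div]

theorem derivative_partialExp_succ [CharZero K] (p : K[X]) (N : ℕ) :
    derivative (partialExp p (N + 1)) = partialExp p N * derivative p := by
  rw [partialExp, partialExp, derivative_sum, sum_range_succ', sum_mul]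
  simp only [derivative_smul, derivative_pow, pow_zero, derivative_one, smul_zero, add_zero]
  refine sum_congr rfl fun k _ => ?_
  have hk : ((k + 1 : ℕ) : K) ≠ 0 := Nat.cast_ne_zero.2 k.succ_ne_zero
  rw [Nat.add_sub_cancel, mul_assoc, C_mul', Nat.factorial_succ, Nat.cast_mul, mul_inv,
    mul_comm ((k + 1 : ℕ) : K)⁻¹, mul_smul, inv_smul_smul₀ hk, smul_mul_assoc]

theorem succ_mul_coeff_partialExp_succ [CharZero K] {p : K[X]} (hp0 : p.coeff 0 = 0) (n : ℕ) :
    (n + 1 : K) * (partialExp p (n + 1)).coeff (n + 1) =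
      ∑ i ∈ range (n + 1), (partialExp p i).coeff i * (derivative p).coeff (n - i) := by
  rw [mul_comm, ← coeff_derivative, derivative_partialExp_succ, coeff_mul,
    Nat.sum_antidiagonal_eq_sum_range_succ
      (fun i j => (partialExp p n).coeff i * (derivative p).coeff j)]
  exact sum_congr rfl fun i hi => by rw [coeff_partialExp_of_le hp0 (by simp at hi; omega)]

end PartialExp

theorem Nat.factorial_mul_prod_Ioc {i n : ℕ} (h : i ≤ n) :
    i ! * ∏ k ∈ Ioc i n, k = n ! := by
  rw [← prod_Ico_id_eq_factorial, ← prod_Ico_id_eq_factorial, ← Ico_add_one_add_one_eq_Ioc,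
    prod_Ico_consecutive _ (by omega) (by omega)]

section Macdonald

variable {R : Type*} [CommRing R]

noncomputable def macdonaldEntry (p : R[X]) (i j : ℕ) : R :=
  (if i = j + 1 then -(i : R) else 0) + if i ≤ j then (derivative p).coeff (j - i) else 0

theorem macdonaldEntry_eq_zero (p : R[X]) {i j : ℕ} (h : j + 1 < i) :
    macdonaldEntry p i j = 0 := by
  simp [macdonaldEntry, show i ≠ j + 1 by omega, show ¬ i ≤ j by omega]

theorem macdonaldEntry_sub_one (p : R[X]) {k : ℕ} (hk : 0 < k) :
    macdonaldEntry p k (k - 1) = -(k : R) := by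
  obtain ⟨k, rfl⟩ := Nat.exists_eq_add_of_lt hk
  simp [macdonaldEntry]

theorem macdonaldEntry_of_le (p : R[X]) {i j : ℕ} (h : i ≤ j) :
    macdonaldEntry p i j = (derivative p).coeff (j - i) := by
  simp [macdonaldEntry, show i ≠ j + 1 by omega, h]

theorem det_leadingBlock_macdonaldEntry_succ (p : R[X]) (n : ℕ) :
    (leadingBlock (macdonaldEntry p) (n + 1)).det = ∑ i ∈ range (n + 1),
      (derivative p).coeff (n - i) * (∏ k ∈ Ioc i n, (k : R)) *
        (leadingBlock (macdonaldEntry p) i).det := by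
  rw [det_leadingBlock_succ fun i j => macdonaldEntry_eq_zero p]
  refine sum_congr rfl fun i hi => ?_
  have hin : i ≤ n := Nat.lt_succ_iff.1 (mem_range.1 hi)
  have hsign : (-1 : R) ^ (i + n) * (-1) ^ (n - i) = 1 := by
    rw [← pow_add, Even.neg_one_pow ⟨n, by omega⟩]
  rw [macdonaldEntry_of_le p hin, prod_congr rfl fun k hk => macdonaldEntry_sub_one p
    (by simp at hk; omega), prod_neg, Nat.card_Ioc]
  linear_combination ((derivative p).coeff (n - i) * (∏ k ∈ Ioc i n, (k : R)) *
    (leadingBlock (macdonaldEntry p) i).det) * hsign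

end Macdonald

theorem det_leadingBlock_macdonaldEntry {K : Type*} [Field K] [CharZero K] {p : K[X]}
    (hp0 : p.coeff 0 = 0) (n : ℕ) :
    (leadingBlock (macdonaldEntry p) n).det = n ! * (partialExp p n).coeff n := by
  induction n using Nat.strong_induction_on with
  | _ n ih =>
  cases n with
  | zero => simp [partialExp]
  | succ n =>
    rw [det_leadingBlock_macdonaldEntry_succ, Nat.factorial_succ, Nat.cast_mul,
      mul_comm _ (n ! : K), mul_assoc, Nat.cast_add_one, succ_mul_coeff_partialExp_succ hp0,
      mul_sum]
    refine sum_congr rfl fun i hi => ?_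
    have hin : i ≤ n := Nat.lt_succ_iff.1 (mem_range.1 hi)
    rw [ih i (by omega), ← Nat.factorial_mul_prod_Ioc hin]
    push_cast
    ring

theorem X0_eq (n : ℕ) :
    X0 n = leadingBlock (fun i j => if i = j + 1 then -(i : ℂ) else 0) n := by
  ext i j
  simp only [X0, leadingBlock, Matrix.neg_apply, Matrix.sum_apply, Matrix.smul_apply,
    Matrix.single_apply, Fin.ext_iff, Matrix.of_apply, smul_eq_mul, mul_ite, mul_one, mul_zero]
  rw [Fin.sum_univ_eq_sum_range (fun c => if c + 1 = (i : ℕ) ∧ c = j then (c : ℂ) + 1 else 0)]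
  simp only [and_comm (a := _ + 1 = _), ite_and, sum_ite_eq', mem_range]
  split_ifs <;> first | (exfalso; omega) | simp_all

theorem Y0_eq (n : ℕ) : Y0 n = leadingBlock (fun i j => if j = i + 1 then 1 else 0) n := by
  ext i j
  simp only [Y0, leadingBlock, Matrix.sum_apply, Matrix.single_apply, Fin.ext_iff,
    Matrix.of_apply]
  rw [Fin.sum_univ_eq_sum_range (fun c => if c = (i : ℕ) ∧ c + 1 = j then (1 : ℂ) else 0)]
  simp only [ite_and, sum_ite_eq', mem_range]
  split_ifs <;> first | rfl | (exfalso; omega)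

theorem det_X0_add_pderiv_Y0_general (n : ℕ) (p : Polynomial ℂ)
    (hp0 : p.coeff 0 = 0) :
    (X0 n + Polynomial.aeval (Y0 n) p.derivative).det =
      (Nat.factorial n : ℂ) *
        ∑ k ∈ Finset.range (n + 1), (p ^ k).coeff n / (Nat.factorial k : ℂ) := by
  have hmatrix : X0 n + aeval (Y0 n) (derivative p) = leadingBlock (macdonaldEntry p) n := by
    rw [X0_eq, Y0_eq, aeval_leadingBlock_shift]
    rfl
  rw [hmatrix, det_leadingBlock_macdonaldEntry hp0, coeff_partialExp]

/-- Macdonald's identity: for a polynomial `p` of degree `n` with zero constant term,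
`det(X₀ + p'(Y₀)) = n! ⋅ [zⁿ] exp(p(z))`, where `[zⁿ] exp(p(z)) = ∑_{k≤n} [zⁿ](pᵏ)/k!`. -/
theorem det_X0_add_pderiv_Y0 (n : ℕ) (p : Polynomial ℂ)
    (hdeg : p.natDegree = n) (hp0 : p.coeff 0 = 0) :
    (X0 n + Polynomial.aeval (Y0 n) p.derivative).det =
      (Nat.factorial n : ℂ) *
        ∑ k ∈ Finset.range (n + 1), (p ^ k).coeff n / (Nat.factorial k : ℂ) :=
  det_X0_add_pderiv_Y0_general n p hp0
end

section
/- Let W be a ℂ-subspace of ℂ(z) and define the fractional right ideal R_W = {D ∈ ℂ(z)[∂] : D.ℂ[z] ⊆ W} and the fractional left ideal L_W = {D ∈ ℂ(z)[∂] : D.W ⊆ ℂ[z]} of the Weyl algebra A₁ = ℂ[z][∂]. If W satisfies W = {D.1 : D ∈ R_W}, then L_W equals the dual ideal (R_W)' = {q : q·R_W ⊆ A₁} (intersected with ℂ(z)[∂]). -/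
/-! Write `A₁` for the operators `∑ aᵢ ∂ⁱ` with `aᵢ ∈ ℂ[z]`. An operator `T = ∑ aᵢ ∂ⁱ` in `ℂ(z)[∂]`
lies in `A₁` iff `T.ℂ[z] ⊆ ℂ[z]`: the coefficients are recovered one at a time from
`T.zⁱ = i! aᵢ + ∑_{j<i} aⱼ ∂ʲzⁱ`. As `ℂ(z)[∂]` is closed under composition, `T ∈ L_W` and
`E ∈ R_W` give `(TE).ℂ[z] ⊆ T.W ⊆ ℂ[z]`, so `TE ∈ A₁`. Conversely every `w ∈ W` is `E.1` for
some `E ∈ R_W`, and then `T.w = (TE).1 ∈ ℂ[z]`. -/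

open scoped BigOperators

/-- `T` is a differential operator on `ℂ(z)` with rational coefficients, with respect to
the derivation `d = d/dz`. -/
def IsDiffOp (d : Derivation ℂ (RatFunc ℂ) (RatFunc ℂ)) (T : RatFunc ℂ → RatFunc ℂ) : Prop :=
  ∃ (N : ℕ) (a : ℕ → RatFunc ℂ),
    ∀ f, T f = ∑ i ∈ Finset.range N, a i * ((d.toLinearMap : Module.End ℂ (RatFunc ℂ)) ^ i) f

/-- `T` is a differential operator with polynomial coefficients, i.e. an element of the
Weyl algebra `A₁ = ℂ[z][∂]` acting on `ℂ(z)`. -/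
def IsPolyOp (d : Derivation ℂ (RatFunc ℂ) (RatFunc ℂ)) (T : RatFunc ℂ → RatFunc ℂ) : Prop :=
  ∃ (N : ℕ) (a : ℕ → Polynomial ℂ),
    ∀ f, T f = ∑ i ∈ Finset.range N,
      algebraMap (Polynomial ℂ) (RatFunc ℂ) (a i) *
        ((d.toLinearMap : Module.End ℂ (RatFunc ℂ)) ^ i) f

/-- The subalgebra `ℂ[z] ⊆ ℂ(z)`. -/
def Cz : Set (RatFunc ℂ) := Set.range (algebraMap (Polynomial ℂ) (RatFunc ℂ))

/-- The fractional right ideal `R_W = {D ∈ ℂ(z)[∂] : D.ℂ[z] ⊆ W}` of `A₁ = ℂ[z][∂]`. -/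
def RW (d : Derivation ℂ (RatFunc ℂ) (RatFunc ℂ)) (W : Submodule ℂ (RatFunc ℂ)) :
    Set (RatFunc ℂ → RatFunc ℂ) :=
  {T | IsDiffOp d T ∧ ∀ f ∈ Cz, T f ∈ W}

open Polynomial

section

variable (d : Derivation ℂ (RatFunc ℂ) (RatFunc ℂ))

local notation "D" => (d.toLinearMap : Module.End ℂ (RatFunc ℂ))

noncomputable section

def polySubalgebra : Subalgebra ℂ (RatFunc ℂ) :=
  (IsScalarTower.toAlgHom ℂ ℂ[X] (RatFunc ℂ)).range

/-- `ℂ(z)[∂]` inside the functions `ℂ(z) → ℂ(z)`, on which `ℂ(z)` acts by left multiplication. -/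
def diffOps : Submodule (RatFunc ℂ) (RatFunc ℂ → RatFunc ℂ) :=
  Submodule.span (RatFunc ℂ) (Set.range fun i : ℕ => ⇑(D ^ i))

end

lemma mem_polySubalgebra_iff {f : RatFunc ℂ} : f ∈ polySubalgebra ↔ f ∈ Cz := by
  simp [polySubalgebra, Cz]

variable {d}

lemma isDiffOp_iff_mem_diffOps {T : RatFunc ℂ → RatFunc ℂ} :
    IsDiffOp d T ↔ T ∈ diffOps d := by
  constructor
  · rintro ⟨N, a, ha⟩
    have hsum : T = ∑ i ∈ Finset.range N, a i • ⇑(D ^ i) := funext fun f => by simp [ha f]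
    rw [hsum]
    exact Submodule.sum_mem _ fun i _ => Submodule.smul_mem _ _ (Submodule.subset_span ⟨i, rfl⟩)
  · rw [diffOps, Finsupp.mem_span_range_iff_exists_finsupp]
    rintro ⟨c, rfl⟩
    obtain ⟨N, hN⟩ := c.support.exists_nat_subset_range
    refine ⟨N, c, fun f => ?_⟩
    rw [Finsupp.sum_of_support_subset c hN (fun i a => a • ⇑(D ^ i)) (fun i _ => zero_smul _ _),
      Finset.sum_apply]
    rfl

lemma derivation_comp_mem_diffOps {T : RatFunc ℂ → RatFunc ℂ} (hT : T ∈ diffOps d) :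
    ⇑d ∘ T ∈ diffOps d := by
  induction hT using Submodule.span_induction with
  | mem T hT =>
    obtain ⟨i, rfl⟩ := hT
    exact Submodule.subset_span ⟨i + 1, by simp only [pow_succ', Module.End.coe_mul]; rfl⟩
  | zero => convert (diffOps d).zero_mem using 1; funext f; simp
  | add T S _ _ hT hS => convert (diffOps d).add_mem hT hS using 1; funext f; simp
  | smul a T hT hdT =>
    have leibniz : ⇑d ∘ (a • T) = a • (⇑d ∘ T) + d a • T := by
      funext f; simp [Derivation.leibniz, mul_comm]
    rw [leibniz]
    exact (diffOps d).add_mem ((diffOps d).smul_mem a hdT) ((diffOps d).smul_mem _ hT)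

lemma pow_comp_mem_diffOps {T : RatFunc ℂ → RatFunc ℂ} (hT : T ∈ diffOps d) (i : ℕ) :
    ⇑(D ^ i) ∘ T ∈ diffOps d := by
  induction i with
  | zero => simpa [Module.End.one_eq_id] using hT
  | succ i ih =>
    rw [pow_succ', Module.End.coe_mul, Function.comp_assoc]
    exact derivation_comp_mem_diffOps ih

lemma comp_mem_diffOps {T E : RatFunc ℂ → RatFunc ℂ} (hT : T ∈ diffOps d)
    (hE : E ∈ diffOps d) : T ∘ E ∈ diffOps d := by
  induction hT using Submodule.span_induction with
  | mem T hT =>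
    obtain ⟨i, rfl⟩ := hT
    exact pow_comp_mem_diffOps hE i
  | zero => exact (diffOps d).zero_mem
  | add T S _ _ hT hS => exact (diffOps d).add_mem hT hS
  | smul a T _ hT => exact (diffOps d).smul_mem a hT

lemma derivation_algebraMap_eq_derivative (hd : d RatFunc.X = 1) (p : ℂ[X]) :
    d (algebraMap ℂ[X] (RatFunc ℂ) p) = algebraMap ℂ[X] (RatFunc ℂ) (derivative p) := by
  rw [← RatFunc.aeval_X_left_eq_algebraMap, Derivation.map_aeval, hd,
    RatFunc.aeval_X_left_eq_algebraMap, smul_eq_mul, mul_one]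

lemma pow_apply_algebraMap (hd : d RatFunc.X = 1) (i : ℕ) (p : ℂ[X]) :
    (D ^ i) (algebraMap ℂ[X] (RatFunc ℂ) p) = algebraMap ℂ[X] (RatFunc ℂ) (derivative^[i] p) := by
  induction i with
  | zero => rfl
  | succ i ih =>
    rw [pow_succ', Module.End.mul_apply, ih, Function.iterate_succ_apply']
    exact derivation_algebraMap_eq_derivative hd _

lemma coeff_mem_Cz_of_mapsTo (hd : d RatFunc.X = 1) {T : RatFunc ℂ → RatFunc ℂ} {N : ℕ}
    {a : ℕ → RatFunc ℂ} (hT : ∀ f, T f = ∑ i ∈ Finset.range N, a i * (D ^ i) f)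
    (h : Set.MapsTo T Cz Cz) (i : ℕ) (hi : i < N) : a i ∈ Cz := by
  rw [← mem_polySubalgebra_iff]
  induction i using Nat.strong_induction_on with
  | _ i ih =>
  have hsum := mem_polySubalgebra_iff.2 (h ⟨X ^ i, rfl⟩)
  rw [hT, ← Finset.add_sum_erase _ _ (Finset.mem_range.2 hi)] at hsum
  have hrest : ∑ j ∈ (Finset.range N).erase i, a j * (D ^ j) (algebraMap ℂ[X] _ (X ^ i)) ∈
      polySubalgebra := by
    refine Subalgebra.sum_mem _ fun j hj => ?_
    rw [pow_apply_algebraMap hd]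
    rcases lt_or_gt_of_ne (Finset.ne_of_mem_erase hj) with hji | hij
    · exact mul_mem (ih j hji (hji.trans hi)) (mem_polySubalgebra_iff.2 ⟨_, rfl⟩)
    · rw [iterate_derivative_eq_zero (by rwa [natDegree_X_pow]), map_zero, mul_zero]
      exact zero_mem _
  have hlead : a i * algebraMap ℂ (RatFunc ℂ) i.factorial ∈ polySubalgebra := by
    have := sub_mem hsum hrest
    rwa [add_sub_cancel_right, pow_apply_algebraMap hd, iterate_derivative_X_pow_eq_C_mul,
      Nat.sub_self, Nat.descFactorial_self, pow_zero, mul_one, RatFunc.algebraMap_C] at this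
  have hfac : (i.factorial : RatFunc ℂ) ≠ 0 := Nat.cast_ne_zero.2 i.factorial_ne_zero
  simpa [mul_assoc, ← map_mul, hfac] using
    mul_mem hlead (polySubalgebra.algebraMap_mem (i.factorial : ℂ)⁻¹)

lemma isPolyOp_iff_isDiffOp_and_mapsTo (hd : d RatFunc.X = 1) {T : RatFunc ℂ → RatFunc ℂ} :
    IsPolyOp d T ↔ IsDiffOp d T ∧ Set.MapsTo T Cz Cz := by
  constructor
  · rintro ⟨N, b, hb⟩
    refine ⟨⟨N, _, hb⟩, ?_⟩
    rintro _ ⟨p, rfl⟩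
    exact ⟨∑ i ∈ Finset.range N, b i * derivative^[i] p, by simp [hb, pow_apply_algebraMap hd]⟩
  · rintro ⟨⟨N, a, ha⟩, hT⟩
    have hcoeff := coeff_mem_Cz_of_mapsTo hd ha hT
    have : ∀ i, ∃ p : ℂ[X], i < N → algebraMap ℂ[X] (RatFunc ℂ) p = a i := fun i =>
      if hi : i < N then (hcoeff i hi).imp fun _ hp _ => hp else ⟨0, fun h => absurd h hi⟩
    choose b hb using this
    refine ⟨N, b, fun f => (ha f).trans (Finset.sum_congr rfl fun i hi => ?_)⟩
    rw [hb i (Finset.mem_range.1 hi)]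

lemma IsDiffOp.comp {T E : RatFunc ℂ → RatFunc ℂ} (hT : IsDiffOp d T) (hE : IsDiffOp d E) :
    IsDiffOp d (T ∘ E) := by
  rw [isDiffOp_iff_mem_diffOps] at *
  exact comp_mem_diffOps hT hE

end

/-- If `W ⊆ ℂ(z)` satisfies `W = {D.1 : D ∈ R_W}`, then the fractional left ideal
`L_W = {D ∈ ℂ(z)[∂] : D.W ⊆ ℂ[z]}` equals the dual ideal
`(R_W)' = {q ∈ ℂ(z)[∂] : q·R_W ⊆ A₁}`. -/
theorem LW_eq_dual_of_RW (d : Derivation ℂ (RatFunc ℂ) (RatFunc ℂ))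
    (hd : d RatFunc.X = 1) (W : Submodule ℂ (RatFunc ℂ))
    (hW : (W : Set (RatFunc ℂ)) = (fun T : RatFunc ℂ → RatFunc ℂ => T 1) '' RW d W) :
    {T : RatFunc ℂ → RatFunc ℂ | IsDiffOp d T ∧ ∀ f ∈ (W : Set (RatFunc ℂ)), T f ∈ Cz} =
      {T : RatFunc ℂ → RatFunc ℂ | IsDiffOp d T ∧ ∀ E ∈ RW d W, IsPolyOp d (T ∘ E)} := by
  ext T
  refine and_congr_right fun hT => ⟨fun hTW E hE => ?_, fun hdual w hw => ?_⟩
  · exact (isPolyOp_iff_isDiffOp_and_mapsTo hd).2 ⟨hT.comp hE.1, fun f hf => hTW _ (hE.2 f hf)⟩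
  · rw [hW] at hw
    obtain ⟨E, hE, rfl⟩ := hw
    exact ((isPolyOp_iff_isDiffOp_and_mapsTo hd).1 (hdual E hE)).2 ⟨1, map_one _⟩
end
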